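/- Let d > 1 be odd and n ≥ 2, and suppose (S, q, λ) is a set of non-contextual value assignments for a state ρ with pairwise distinct value assignments λ_ν given by characters ω^{[φ(ν),·]} for an injective φ : S → V. Then W_ρ(u) = Σ_{ν ∈ S} δ_{u + φ(ν), 0} q(ν); in particular, for each u ∈ V with −u = φ(ν) for some ν ∈ S, W_ρ(u) = q(ν), and W_ρ(u) = 0 if −u is not in the image of φ. -/

import Mathlib

open Complex Matrix BigOperators Finset
open scoped ComplexOrder

noncomputable section

/-- ω = e^{2πi/d} -/
def omeg (d : ℕ) : ℂ := Complex.exp (2 * Real.pi * Complex.I / d)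

/-- ω raised to a `ZMod d` exponent. -/
def wpow (d : ℕ) [NeZero d] (x : ZMod d) : ℂ := omeg d ^ x.val

/-- standard inner product on `(ZMod d)^n` -/
def ip {d n : ℕ} (a b : Fin n → ZMod d) : ZMod d := ∑ i, a i * b i

/-- the phase space `V = Z_d^n × Z_d^n` -/
abbrev PS (d n : ℕ) := (Fin n → ZMod d) × (Fin n → ZMod d)

/-- symplectic form `[u,v] = (u_Z|v_X) − (u_X|v_Z)` -/
def symp {d n : ℕ} (u v : PS d n) : ZMod d := ip u.1 v.2 - ip u.2 v.1

/-- `Z^a = Z^{a_1} ⊗ ⋯ ⊗ Z^{a_n}` : diagonal matrix with entries `ω^{(a|k)}` -/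
def Zop (d n : ℕ) [NeZero d] (a : Fin n → ZMod d) :
    Matrix (Fin n → ZMod d) (Fin n → ZMod d) ℂ :=
  Matrix.of fun k l => if k = l then wpow d (ip a k) else 0

/-- `X^a = X^{a_1} ⊗ ⋯ ⊗ X^{a_n}` : shift matrix `|l⟩ ↦ |l + a⟩` -/
def Xop (d n : ℕ) [NeZero d] (a : Fin n → ZMod d) :
    Matrix (Fin n → ZMod d) (Fin n → ZMod d) ℂ :=
  Matrix.of fun k l => if k = l + a then 1 else 0

/-- Heisenberg–Weyl operator `T_u = ω^{-(u_Z|u_X)/2} Z^{u_Z} X^{u_X}` -/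
def HW (d n : ℕ) [NeZero d] (u : PS d n) :
    Matrix (Fin n → ZMod d) (Fin n → ZMod d) ℂ :=
  wpow d (-((2 : ZMod d)⁻¹ * ip u.1 u.2)) • (Zop d n u.1 * Xop d n u.2)

/-- phase-point operator `A_u = d^{-n} Σ_v ω^{[u,v]} T_v` -/
def phasePoint (d n : ℕ) [NeZero d] (u : PS d n) :
    Matrix (Fin n → ZMod d) (Fin n → ZMod d) ℂ :=
  ((d : ℂ) ^ n)⁻¹ • ∑ v : PS d n, wpow d (symp u v) • HW d n v

/-- spectral projector `Π_u^s = (1/d) Σ_k ω^{-ks} T_u^k` -/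
def specProj (d n : ℕ) [NeZero d] (a : PS d n) (s : ZMod d) :
    Matrix (Fin n → ZMod d) (Fin n → ZMod d) ℂ :=
  (d : ℂ)⁻¹ • ∑ k : ZMod d, wpow d (-(k * s)) • (HW d n a) ^ (k.val)

/-!
Expanding `A_u` in the Heisenberg–Weyl operators gives
`W_ρ(u) = d^{-2n} Σ_v ω^{[u,v]} Tr(T_v ρ)`. Inserting the non-contextual model for `Tr(T_v ρ)`
and exchanging the sums leaves `Σ_ν q(ν) d^{-2n} Σ_v ω^{[u + φ(ν), v]}`; since `v ↦ ω^{[w,v]}` is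
a nontrivial character of `V` for `w ≠ 0` (the symplectic form is nondegenerate), the inner
character sum is `d^{2n} δ_{u + φ(ν), 0}`.
-/

lemma wpow_eq_stdAddChar (d : ℕ) [NeZero d] (x : ZMod d) : wpow d x = ZMod.stdAddChar x := by
  rw [ZMod.stdAddChar_apply, ZMod.toCircle_apply, wpow, omeg, ← Complex.exp_nat_mul]
  ring_nf

lemma wpow_add (d : ℕ) [NeZero d] (x y : ZMod d) : wpow d (x + y) = wpow d x * wpow d y := by
  simp only [wpow_eq_stdAddChar, AddChar.map_add_eq_mul]

section Symplectic

variable {d n : ℕ}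

lemma symp_add_left (u w v : PS d n) : symp (u + w) v = symp u v + symp w v := by
  simp only [symp, ip, Prod.fst_add, Prod.snd_add, Pi.add_apply, add_mul, Finset.sum_add_distrib]
  ring

lemma symp_add_right (w u v : PS d n) : symp w (u + v) = symp w u + symp w v := by
  simp only [symp, ip, Prod.fst_add, Prod.snd_add, Pi.add_apply, mul_add, Finset.sum_add_distrib]
  ring

lemma eq_zero_of_forall_symp_eq_zero {w : PS d n} (h : ∀ v, symp w v = 0) : w = 0 := by
  ext i
  · simpa [symp, ip, Pi.single_apply] using h (0, Pi.single i 1)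
  · simpa [symp, ip, Pi.single_apply] using h (Pi.single i 1, 0)

variable [NeZero d]

def sympChar (w : PS d n) : AddChar (PS d n) ℂ :=
  ZMod.stdAddChar.compAddMonoidHom (AddMonoidHom.mk' (symp w) (symp_add_right w))

lemma sympChar_apply (w v : PS d n) : sympChar w v = wpow d (symp w v) := by
  rw [wpow_eq_stdAddChar]
  rfl

lemma sympChar_eq_zero_iff {w : PS d n} : sympChar w = 0 ↔ w = 0 := by
  refine ⟨fun h => eq_zero_of_forall_symp_eq_zero fun v => ZMod.injective_stdAddChar ?_, ?_⟩
  · simpa [sympChar] using DFunLike.congr_fun h v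
  · rintro rfl
    ext v
    simp [sympChar, symp, ip]

lemma sum_wpow_symp (w : PS d n) :
    ∑ v, wpow d (symp w v) = if w = 0 then (d : ℂ) ^ n * (d : ℂ) ^ n else 0 := by
  simp_rw [← sympChar_apply, AddChar.sum_eq_ite, sympChar_eq_zero_iff]
  simp [Fintype.card_prod, Fintype.card_pi]

end Symplectic

lemma trace_phasePoint_mul {d n : ℕ} [NeZero d] (u : PS d n)
    (ρ : Matrix (Fin n → ZMod d) (Fin n → ZMod d) ℂ) :
    (phasePoint d n u * ρ).trace =
      ((d : ℂ) ^ n)⁻¹ * ∑ v, wpow d (symp u v) * (HW d n v * ρ).trace := by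
  simp only [phasePoint, Matrix.smul_mul, Matrix.sum_mul, Matrix.trace_smul, Matrix.trace_sum,
    smul_eq_mul]

theorem inv_pow_mul_trace_phasePoint_mul_eq {d n : ℕ} [NeZero d]
    {ρ : Matrix (Fin n → ZMod d) (Fin n → ZMod d) ℂ} {S : Type*} [Fintype S] {q : S → ℂ}
    {φ : S → PS d n} (hρ : ∀ v, (HW d n v * ρ).trace = ∑ ν, wpow d (symp (φ ν) v) * q ν)
    (u : PS d n) :
    ((d : ℂ) ^ n)⁻¹ * (phasePoint d n u * ρ).trace = ∑ ν, if u + φ ν = 0 then q ν else 0 := by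
  have hd : (d : ℂ) ^ n ≠ 0 := pow_ne_zero _ (Nat.cast_ne_zero.mpr (NeZero.ne d))
  have hswap : ∑ v, wpow d (symp u v) * ∑ ν, wpow d (symp (φ ν) v) * q ν
      = ∑ ν, q ν * ∑ v, wpow d (symp (u + φ ν) v) := by
    simp_rw [Finset.mul_sum, symp_add_left, wpow_add]
    rw [Finset.sum_comm]
    exact Finset.sum_congr rfl fun _ _ => Finset.sum_congr rfl fun _ _ => by ring
  simp only [trace_phasePoint_mul, hρ]
  rw [← mul_assoc, hswap, Finset.mul_sum]
  refine Finset.sum_congr rfl fun ν _ => ?_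
  rw [sum_wpow_symp]
  split_ifs
  · field_simp
  · simp

theorem stmt17_general (d n : ℕ) [NeZero d]
    (ρ : Matrix (Fin n → ZMod d) (Fin n → ZMod d) ℂ)
    (S : Type*) [Fintype S] (q : S → ℝ)
    (φ : S → PS d n) (hφ : Function.Injective φ)
    (hpred : ∀ v : PS d n,
      (HW d n v * ρ).trace = ∑ ν, wpow d (symp (φ ν) v) * (q ν : ℂ)) :
    ∀ u : PS d n,
      (((d : ℂ) ^ n)⁻¹ * (phasePoint d n u * ρ).trace
        = ∑ ν, if u + φ ν = 0 then (q ν : ℂ) else 0) ∧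
      (∀ ν, φ ν = -u →
        ((d : ℂ) ^ n)⁻¹ * (phasePoint d n u * ρ).trace = (q ν : ℂ)) ∧
      ((∀ ν, φ ν ≠ -u) →
        ((d : ℂ) ^ n)⁻¹ * (phasePoint d n u * ρ).trace = 0) := by
  intro u
  have hW := inv_pow_mul_trace_phasePoint_mul_eq hpred u
  refine ⟨hW, fun ν hν => ?_, fun hS => ?_⟩ <;> simp_rw [add_eq_zero_iff_eq_neg'] at hW
  · rw [hW, Finset.sum_eq_single ν] <;> simp +contextual [← hν, hφ.eq_iff]
  · simp [hW, hS]

theorem stmt17 (d n : ℕ) [NeZero d] (hd : Odd d) (hd1 : 1 < d) (hn : 2 ≤ n)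
    (ρ : Matrix (Fin n → ZMod d) (Fin n → ZMod d) ℂ)
    (hρ : ρ.PosSemidef) (htr : ρ.trace = 1)
    (S : Type*) [Fintype S] (q : S → ℝ)
    (hq : ∀ ν, 0 ≤ q ν) (hq1 : ∑ ν, q ν = 1)
    (φ : S → PS d n) (hφ : Function.Injective φ)
    (hpred : ∀ v : PS d n,
      (HW d n v * ρ).trace = ∑ ν, wpow d (symp (φ ν) v) * (q ν : ℂ)) :
    ∀ u : PS d n,
      (((d : ℂ) ^ n)⁻¹ * (phasePoint d n u * ρ).trace
        = ∑ ν, if u + φ ν = 0 then (q ν : ℂ) else 0) ∧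
      (∀ ν, φ ν = -u →
        ((d : ℂ) ^ n)⁻¹ * (phasePoint d n u * ρ).trace = (q ν : ℂ)) ∧
      ((∀ ν, φ ν ≠ -u) →
        ((d : ℂ) ^ n)⁻¹ * (phasePoint d n u * ρ).trace = 0) :=
  stmt17_general d n ρ S q φ hφ hpred
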